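/- There exists a constant C > 0, depending only on q, such that for all n ∈ ½ℤ₊ with n ≥ 1/2, all half-integers i ∈ {−n, …, n} and j ∈ {−n+1/2, …, n−1/2}, every entry of the 2×2 matrix b⁻_{nij} + q^{n+i}(1−q^{2n−2i})^{1/2} · diag((1−q^{2n+2j+1})^{1/2}, (1−q^{2n+2j−1})^{1/2}) has absolute value at most C·q^{2n}. -/

import Mathlib

noncomputable section

open Real

/-- The q-number `[m] = (q^m - q^(-m))/(q - q⁻¹)`. -/
def qnum (q m : ℝ) : ℝ := (q ^ m - q ^ (-m)) / (q - q⁻¹)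

/-- The 2×2 matrix `a⁺_{nij}`. -/
def aP (q n i j : ℝ) : Matrix (Fin 2) (Fin 2) ℝ :=
  (q ^ ((i + j - 1/2) / 2) * Real.sqrt (qnum q (n + i + 1))) •
    !![q ^ (-n - 1/2) * Real.sqrt (qnum q (n + j + 3/2)) / qnum q (2*n + 2), 0;
       q ^ ((1:ℝ)/2) * Real.sqrt (qnum q (n - j + 1/2)) / (qnum q (2*n + 1) * qnum q (2*n + 2)),
       q ^ (-n) * Real.sqrt (qnum q (n + j + 1/2)) / qnum q (2*n + 1)]

/-- The 2×2 matrix `a⁻_{nij}`. -/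
def aM (q n i j : ℝ) : Matrix (Fin 2) (Fin 2) ℝ :=
  (q ^ ((i + j - 1/2) / 2) * Real.sqrt (qnum q (n - i))) •
    !![q ^ (n + 1) * Real.sqrt (qnum q (n - j + 1/2)) / qnum q (2*n + 1),
       -(q ^ ((1:ℝ)/2) * Real.sqrt (qnum q (n + j + 1/2)) / (qnum q (2*n) * qnum q (2*n + 1)));
       0, q ^ (n + 1/2) * Real.sqrt (qnum q (n - j - 1/2)) / qnum q (2*n)]

/-- The 2×2 matrix `b⁺_{nij}`. -/
def bP (q n i j : ℝ) : Matrix (Fin 2) (Fin 2) ℝ :=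
  (q ^ ((i + j - 1/2) / 2) * Real.sqrt (qnum q (n + i + 1))) •
    !![Real.sqrt (qnum q (n - j + 3/2)) / qnum q (2*n + 2), 0;
       -(q ^ (-n - 1) * Real.sqrt (qnum q (n + j + 1/2)) / (qnum q (2*n + 1) * qnum q (2*n + 2))),
       q ^ (-(1:ℝ)/2) * Real.sqrt (qnum q (n - j + 1/2)) / qnum q (2*n + 1)]

/-- The 2×2 matrix `b⁻_{nij}`. -/
def bM (q n i j : ℝ) : Matrix (Fin 2) (Fin 2) ℝ :=
  (q ^ ((i + j - 1/2) / 2) * Real.sqrt (qnum q (n - i))) •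
    !![-(q ^ (-(1:ℝ)/2) * Real.sqrt (qnum q (n + j + 1/2)) / qnum q (2*n + 1)),
       -(q ^ n * Real.sqrt (qnum q (n - j + 1/2)) / (qnum q (2*n) * qnum q (2*n + 1)));
       0, -(Real.sqrt (qnum q (n + j - 1/2)) / qnum q (2*n))]

/-- `n` is a nonnegative half-integer: `n ∈ ½ℤ₊ = {0, 1/2, 1, 3/2, …}`. -/
def HalfNat (n : ℝ) : Prop := ∃ N : ℕ, (N : ℝ) = 2 * n

/-- `i ∈ {-n, -n+1, …, n}`. -/
def IdxRange (n i : ℝ) : Prop := (∃ k : ℕ, (k : ℝ) = i + n) ∧ i ≤ n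

/-- `j ∈ {-n+1/2, -n+3/2, …, n-1/2}`. -/
def JRangeIn (n j : ℝ) : Prop := (∃ k : ℕ, (k : ℝ) = j + n - 1/2) ∧ j ≤ n - 1/2

/-- `j ∈ {-n-1/2, -n+1/2, …, n+1/2}`. -/
def JRangeOut (n j : ℝ) : Prop := (∃ k : ℕ, (k : ℝ) = j + n + 1/2) ∧ j ≤ n + 1/2

/-!
With `[m] = q^(1-m) (1 - q^(2m)) / (1 - q²)`, every entry of `b⁻_{nij}` is a power of `q` times
factors `√(1 - q^e) ∈ [0, 1]` over `1 - q^(4n)` or `1 - q^(4n+2)`. A diagonal entry is `-x/(1 - q^e)`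
where `x` is exactly the corresponding entry of the correction term, so their sum is
`-x q^e/(1 - q^e)` with `e ≥ 4n`; the off-diagonal entry carries the factor `q^(4n+i+j-1/2) ≤ q^(2n)`.
All are therefore bounded by `q^(2n)/(1 - q²)`.
-/

section QNumber

variable {q : ℝ}

lemma qnum_eq (hq0 : 0 < q) (hq1 : q ≠ 1) (m : ℝ) :
    qnum q m = q ^ (1 - m) * (1 - q ^ (2 * m)) / (1 - q ^ 2) := by
  have hq2 : q ^ 2 ≠ 1 := (pow_eq_one_iff_of_nonneg hq0.le two_ne_zero).not.2 hq1
  have : q ^ 2 - 1 ≠ 0 := sub_ne_zero.2 hq2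
  have : 1 - q ^ 2 ≠ 0 := sub_ne_zero.2 hq2.symm
  have hm : 0 < q ^ m := rpow_pos_of_pos hq0 m
  rw [qnum, rpow_sub hq0, rpow_one, rpow_neg hq0.le, two_mul, rpow_add hq0]
  field_simp
  ring

lemma sqrt_qnum (hq0 : 0 < q) (hq1 : q < 1) {m : ℝ} (hm : 0 ≤ m) :
    √(qnum q m) = q ^ ((1 - m) / 2) * √(1 - q ^ (2 * m)) / √(1 - q ^ 2) := by
  have h : 0 ≤ 1 - q ^ (2 * m) := sub_nonneg.2 (rpow_le_one hq0.le hq1.le (by linarith))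
  rw [qnum_eq hq0 hq1.ne, sqrt_div (by positivity), sqrt_mul (by positivity), sqrt_eq_rpow,
    ← rpow_mul hq0.le, div_eq_mul_one_div (1 - m)]

lemma sqrt_qnum_mul_sqrt_qnum_div_qnum (hq0 : 0 < q) (hq1 : q < 1) {a b c : ℝ}
    (ha : 0 ≤ a) (hb : 0 ≤ b) (hc : 0 < c) :
    √(qnum q a) * √(qnum q b) / qnum q c
      = q ^ (c - (a + b) / 2) * √(1 - q ^ (2 * a)) * √(1 - q ^ (2 * b)) / (1 - q ^ (2 * c)) := by
  have hq2 : 0 < 1 - q ^ 2 := by nlinarith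
  have hc2 : 0 < 1 - q ^ (2 * c) := sub_pos.2 (rpow_lt_one hq0.le hq1 (by linarith))
  have hexp : q ^ ((1 - a) / 2) * q ^ ((1 - b) / 2) = q ^ (c - (a + b) / 2) * q ^ (1 - c) := by
    rw [← rpow_add hq0, ← rpow_add hq0]; ring_nf
  have : 0 < q ^ (1 - c) := rpow_pos_of_pos hq0 _
  rw [sqrt_qnum hq0 hq1 ha, sqrt_qnum hq0 hq1 hb, qnum_eq hq0 hq1.ne, div_mul_div_comm,
    mul_mul_mul_comm, hexp, mul_self_sqrt hq2.le]
  field_simp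

end QNumber

section bMinus

variable {q n i j : ℝ}

lemma bM_zero_zero (hq0 : 0 < q) (hq1 : q < 1) (hn : 0 ≤ n) (hi : i ≤ n) (hj : 0 ≤ n + j + 1/2) :
    bM q n i j 0 0 = -(q ^ (n + i) * √(1 - q ^ (2*n - 2*i)) * √(1 - q ^ (2*n + 2*j + 1))
      / (1 - q ^ (4*n + 2))) := by
  have hfactor := sqrt_qnum_mul_sqrt_qnum_div_qnum hq0 hq1 (sub_nonneg.2 hi) hj
    (by linarith : (0:ℝ) < 2*n + 1)
  have hexp : q ^ ((i + j - 1/2) / 2) * q ^ (-(1:ℝ)/2) * q ^ (2*n + 1 - (n - i + (n + j + 1/2)) / 2)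
      = q ^ (n + i) := by
    rw [← rpow_add hq0, ← rpow_add hq0]; ring_nf
  simp only [bM, Matrix.smul_apply, smul_eq_mul, Matrix.of_apply, Matrix.cons_val',
    Matrix.cons_val_zero, Matrix.empty_val', Matrix.cons_val_fin_one]
  calc _ = -(q ^ ((i + j - 1/2) / 2) * q ^ (-(1:ℝ)/2) *
        (√(qnum q (n - i)) * √(qnum q (n + j + 1/2)) / qnum q (2*n + 1))) := by ring
    _ = _ := by
      rw [hfactor, ← hexp]
      ring_nf

lemma bM_one_one (hq0 : 0 < q) (hq1 : q < 1) (hn : 0 < n) (hi : i ≤ n) (hj : 0 ≤ n + j - 1/2) :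
    bM q n i j 1 1 = -(q ^ (n + i) * √(1 - q ^ (2*n - 2*i)) * √(1 - q ^ (2*n + 2*j - 1))
      / (1 - q ^ (4*n))) := by
  have hfactor := sqrt_qnum_mul_sqrt_qnum_div_qnum hq0 hq1 (sub_nonneg.2 hi) hj
    (by linarith : (0:ℝ) < 2*n)
  have hexp : q ^ ((i + j - 1/2) / 2) * q ^ (2*n - (n - i + (n + j - 1/2)) / 2) = q ^ (n + i) := by
    rw [← rpow_add hq0]; ring_nf
  simp only [bM, Matrix.smul_apply, smul_eq_mul, Matrix.of_apply, Matrix.cons_val',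
    Matrix.cons_val_one, Matrix.empty_val', Matrix.cons_val_fin_one]
  calc _ = -(q ^ ((i + j - 1/2) / 2) *
        (√(qnum q (n - i)) * √(qnum q (n + j - 1/2)) / qnum q (2*n))) := by ring
    _ = _ := by
      rw [hfactor, ← hexp]
      ring_nf

lemma bM_zero_one (hq0 : 0 < q) (hq1 : q < 1) (hn : 0 < n) (hi : i ≤ n) (hj : 0 ≤ n - j + 1/2) :
    bM q n i j 0 1 = -(q ^ (4*n + i + j - 1/2) * (1 - q ^ 2) * √(1 - q ^ (2*n - 2*i))
      * √(1 - q ^ (2*n - 2*j + 1)) / ((1 - q ^ (4*n)) * (1 - q ^ (4*n + 2)))) := by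
  have hfactor := sqrt_qnum_mul_sqrt_qnum_div_qnum hq0 hq1 (sub_nonneg.2 hi) hj
    (by linarith : (0:ℝ) < 2*n)
  have hexp : q ^ ((i + j - 1/2) / 2) * q ^ n * q ^ (2*n - (n - i + (n - j + 1/2)) / 2)
      / q ^ (1 - (2*n + 1)) = q ^ (4*n + i + j - 1/2) := by
    rw [← rpow_add hq0, ← rpow_add hq0, ← rpow_sub hq0]; ring_nf
  simp only [bM, Matrix.smul_apply, smul_eq_mul, Matrix.of_apply, Matrix.cons_val',
    Matrix.cons_val_zero, Matrix.cons_val_one, Matrix.empty_val', Matrix.cons_val_fin_one]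
  calc _ = -(q ^ ((i + j - 1/2) / 2) * q ^ n *
        (√(qnum q (n - i)) * √(qnum q (n - j + 1/2)) / qnum q (2*n)) / qnum q (2*n + 1)) := by
        ring
    _ = -(q ^ ((i + j - 1/2) / 2) * q ^ n * q ^ (2*n - (n - i + (n - j + 1/2)) / 2)
          / q ^ (1 - (2*n + 1)) * (1 - q ^ 2) * √(1 - q ^ (2 * (n - i)))
          * √(1 - q ^ (2 * (n - j + 1/2))) / ((1 - q ^ (2 * (2*n))) * (1 - q ^ (2 * (2*n + 1))))) := by
        have : 0 < 1 - q ^ (2 * (2*n + 1)) := sub_pos.2 (rpow_lt_one hq0.le hq1 (by linarith))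
        have : 0 < q ^ (1 - (2*n + 1)) := rpow_pos_of_pos hq0 _
        have : 0 < 1 - q ^ 2 := by nlinarith
        rw [hfactor, qnum_eq hq0 hq1.ne (2*n + 1)]
        field_simp
    _ = _ := by
      rw [hexp]
      ring_nf

lemma bM_one_zero : bM q n i j 1 0 = 0 := by
  simp [bM]

end bMinus

section Bounds

open unitInterval

variable {q : ℝ}

lemma sqrt_one_sub_rpow_mem_unitInterval (hq0 : 0 ≤ q) (e : ℝ) : √(1 - q ^ e) ∈ I :=
  ⟨sqrt_nonneg _, sqrt_le_one.2 (by linarith [rpow_nonneg hq0 e])⟩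

lemma rpow_le_sq (hq0 : 0 < q) (hq1 : q < 1) {e : ℝ} (he : 2 ≤ e) : q ^ e ≤ q ^ 2 := by
  simpa only [rpow_two] using rpow_le_rpow_of_exponent_ge hq0 hq1.le he

lemma abs_neg_div_one_sub_add_le {x t : ℝ} (hx : x ∈ I) (ht0 : 0 ≤ t) (ht1 : t < 1) :
    |-(x / (1 - t)) + x| ≤ t / (1 - t) := by
  have h1t : 0 < 1 - t := sub_pos.2 ht1
  have hx0 : 0 ≤ x := hx.1
  have : -(x / (1 - t)) + x = -(x * t / (1 - t)) := by field_simp; ring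
  rw [this, abs_neg, abs_of_nonneg (by positivity)]
  gcongr
  exact mul_le_of_le_one_left ht0 hx.2

lemma rpow_div_one_sub_rpow_le (hq0 : 0 < q) (hq1 : q < 1) {e f : ℝ} (he : 2 ≤ e) (hf : f ≤ e) :
    q ^ e / (1 - q ^ e) ≤ q ^ f / (1 - q ^ 2) := by
  have hq2 : 0 < 1 - q ^ 2 := by nlinarith
  have := rpow_le_sq hq0 hq1 he
  exact div_le_div₀ (rpow_nonneg hq0.le f) (rpow_le_rpow_of_exponent_ge hq0 hq1.le hf) hq2
    (by linarith)

lemma abs_neg_div_one_sub_rpow_add_le (hq0 : 0 < q) (hq1 : q < 1) {x e f : ℝ} (hx : x ∈ I)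
    (he : 2 ≤ e) (hf : f ≤ e) : |-(x / (1 - q ^ e)) + x| ≤ q ^ f / (1 - q ^ 2) :=
  (abs_neg_div_one_sub_add_le hx (rpow_nonneg hq0.le e) (rpow_lt_one hq0.le hq1 (by linarith))).trans
    (rpow_div_one_sub_rpow_le hq0 hq1 he hf)

lemma abs_neg_rpow_mul_div_le (hq0 : 0 < q) (hq1 : q < 1) {x e f e₁ e₂ : ℝ} (hx : x ∈ I)
    (hf : f ≤ e) (he₁ : 2 ≤ e₁) (he₂ : 2 ≤ e₂) :
    |-(q ^ e * (1 - q ^ 2) * x / ((1 - q ^ e₁) * (1 - q ^ e₂)))| ≤ q ^ f / (1 - q ^ 2) := by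
  have hq2 : 0 < 1 - q ^ 2 := by nlinarith
  have h₁ := rpow_le_sq hq0 hq1 he₁
  have h₂ := rpow_le_sq hq0 hq1 he₂
  have hx0 : 0 ≤ x := hx.1
  have hqe : 0 ≤ q ^ e := rpow_nonneg hq0.le e
  have hnum : q ^ e * (1 - q ^ 2) * x ≤ q ^ f * (1 - q ^ 2) :=
    (mul_le_of_le_one_right (by positivity) hx.2).trans
      (mul_le_mul_of_nonneg_right (rpow_le_rpow_of_exponent_ge hq0 hq1.le hf) hq2.le)
  rw [abs_neg, abs_of_nonneg (div_nonneg (by positivity) (by nlinarith))]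
  calc q ^ e * (1 - q ^ 2) * x / ((1 - q ^ e₁) * (1 - q ^ e₂))
      ≤ q ^ f * (1 - q ^ 2) / ((1 - q ^ 2) * (1 - q ^ 2)) :=
        div_le_div₀ (by positivity) hnum (by positivity)
          (mul_le_mul (by linarith) (by linarith) hq2.le (by linarith))
    _ = q ^ f / (1 - q ^ 2) := by field_simp

end Bounds

open unitInterval in
/-- There is `C > 0` depending only on `q` such that for all `n ∈ ½ℤ₊` with
`n ≥ 1/2`, `i ∈ {-n,…,n}`, `j ∈ {-n+1/2,…,n-1/2}`, every entry of
`b⁻_{nij} + q^(n+i) (1-q^(2n-2i))^(1/2) diag((1-q^(2n+2j+1))^(1/2), (1-q^(2n+2j-1))^(1/2))`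
has absolute value at most `C·q^(2n)`. -/
theorem bMinus_asymptotics (q : ℝ) (hq0 : 0 < q) (hq1 : q < 1) :
    ∃ C : ℝ, 0 < C ∧ ∀ n i j : ℝ, HalfNat n → 1/2 ≤ n → IdxRange n i → JRangeIn n j →
      ∀ r s : Fin 2,
        |(bM q n i j + (q ^ (n + i) * Real.sqrt (1 - q ^ (2*n - 2*i))) •
            !![Real.sqrt (1 - q ^ (2*n + 2*j + 1)), 0;
               0, Real.sqrt (1 - q ^ (2*n + 2*j - 1))]) r s|
          ≤ C * q ^ (2 * n) := by
  have hq2 : 0 < 1 - q ^ 2 := by nlinarith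
  refine ⟨(1 - q ^ 2)⁻¹, inv_pos.2 hq2, ?_⟩
  rintro n i j - hn ⟨⟨k, hk⟩, hin⟩ ⟨⟨l, hl⟩, hjn⟩ r s
  have hi : 0 ≤ i + n := hk ▸ k.cast_nonneg
  have hj : 0 ≤ j + n - 1/2 := hl ▸ l.cast_nonneg
  have hs := sqrt_one_sub_rpow_mem_unitInterval hq0.le
  have hp : q ^ (n + i) ∈ I := ⟨rpow_nonneg hq0.le _, rpow_le_one hq0.le hq1.le (by linarith)⟩
  rw [inv_mul_eq_div]
  fin_cases r <;> fin_cases s <;>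
    simp only [Matrix.add_apply, Matrix.smul_apply, smul_eq_mul, Matrix.of_apply,
      Matrix.cons_val', Matrix.cons_val_zero, Matrix.cons_val_one, Matrix.empty_val',
      Matrix.cons_val_fin_one, Fin.zero_eta, Fin.mk_one, mul_zero, add_zero]
  · rw [bM_zero_zero hq0 hq1 (by linarith) hin (by linarith)]
    exact abs_neg_div_one_sub_rpow_add_le hq0 hq1 (mul_mem (mul_mem hp (hs _)) (hs _))
      (by linarith) (by linarith)
  · rw [bM_zero_one hq0 hq1 (by linarith) hin (by linarith), mul_assoc _ (√_)]
    exact abs_neg_rpow_mul_div_le hq0 hq1 (mul_mem (hs _) (hs _)) (by linarith) (by linarith)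
      (by linarith)
  · rw [bM_one_zero, abs_zero]
    positivity
  · rw [bM_one_one hq0 hq1 (by linarith) hin (by linarith)]
    exact abs_neg_div_one_sub_rpow_add_le hq0 hq1 (mul_mem (mul_mem hp (hs _)) (hs _))
      (by linarith) (by linarith)
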